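/- arXiv:2605.11451 — 8 statements merged into one kernel-verified Lean document; each statement's English description precedes it below -/
import Mathlib

section
/- Let X be uniform on the cross-polytope B_1^n (n ≥ 2) and i ≠ j. Then E[X_i^4] = 24/((n+1)(n+2)(n+3)(n+4)) and E[X_i^2 X_j^2] = 4/((n+1)(n+2)(n+3)(n+4)). -/
/-!
Let `N` be a nonnegative, positively homogeneous function on a finite-dimensional space `E` of
dimension `n` and `g ≥ 0` homogeneous of degree `d`. Writing `e^{-N x} = ∫_{t ≥ N x} e^{-t} dt`
and swapping the integrals, `∫ g e^{-N}` becomes `∫_0^∞ e^{-t} (∫_{N ≤ t} g) dt`, and scaling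
gives `∫_{N ≤ t} g = t^{n+d} ∫_{N ≤ 1} g`; hence `∫ g e^{-N} = (n+d)! ∫_{N ≤ 1} g`.

For `N = ‖·‖₁` on `ℝⁿ` and `g = ∏ |x_k|^{c_k}` the left side factorises into one-dimensional
Gamma integrals `∫ |u|^{c_k} e^{-|u|} du = 2 c_k!`, so
`∫_{B_1^n} ∏ |x_k|^{c_k} dx = ∏ (2 c_k!) / (n + ∑ c_k)!`.
The case `c = 0` is the volume `2^n / n!`, and the uniform moments are
`E ∏ |X_k|^{c_k} = n! ∏ c_k! / (n + ∑ c_k)!`.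
-/

open MeasureTheory Real Set Module
open scoped ENNReal Nat

theorem integral_Ioi_exp_neg_mul_pow (m : ℕ) : ∫ t in Ioi (0 : ℝ), exp (-t) * t ^ m = m ! := by
  simpa [Gamma_nat_eq_factorial] using (Gamma_eq_integral (s := m + 1) (by positivity)).symm

theorem setLIntegral_Ioi_exp_neg_mul_pow (m : ℕ) :
    ∫⁻ t in Ioi (0 : ℝ), ENNReal.ofReal (exp (-t)) * ENNReal.ofReal t ^ m = m ! := by
  -- a Bochner integral with a nonzero value is that of an integrable function
  have h_int : IntegrableOn (fun t => exp (-t) * t ^ m) (Ioi 0) :=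
    .of_integral_ne_zero (by rw [integral_Ioi_exp_neg_mul_pow]; positivity)
  rw [setLIntegral_congr_fun measurableSet_Ioi fun t (ht : 0 < t) => by
      rw [← ENNReal.ofReal_pow ht.le, ← ENNReal.ofReal_mul (exp_pos _).le],
    ← ofReal_integral_eq_lintegral_ofReal h_int ((ae_restrict_iff' measurableSet_Ioi).mpr
      (.of_forall fun t (ht : 0 < t) => by positivity)),
    integral_Ioi_exp_neg_mul_pow, ENNReal.ofReal_natCast]

theorem integral_exp_neg_abs_mul_abs_pow (m : ℕ) :
    ∫ x : ℝ, exp (-|x|) * |x| ^ m = 2 * m ! := by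
  rw [integral_comp_abs (f := fun t => exp (-t) * t ^ m), integral_Ioi_exp_neg_mul_pow]

theorem ofReal_exp_neg_eq_setLIntegral_Ici (s : ℝ) :
    ENNReal.ofReal (exp (-s)) = ∫⁻ t in Ici s, ENNReal.ofReal (exp (-t)) := by
  rw [← setLIntegral_congr Ioi_ae_eq_Ici, ← ofReal_integral_eq_lintegral_ofReal
    (integrableOn_exp_neg_Ioi s) (.of_forall fun t => (exp_pos _).le), integral_exp_neg_Ioi]

section HomogeneousWeight

variable {E : Type*} [NormedAddCommGroup E] [NormedSpace ℝ E] [FiniteDimensional ℝ E]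
  [MeasurableSpace E] [BorelSpace E] (μ : Measure E) [μ.IsAddHaarMeasure]

theorem lintegral_comp_smul_of_pos (F : E → ℝ≥0∞) {t : ℝ} (ht : 0 < t) :
    ∫⁻ x, F (t • x) ∂μ = ENNReal.ofReal (t ^ finrank ℝ E)⁻¹ * ∫⁻ x, F x ∂μ :=
  calc ∫⁻ x, F (t • x) ∂μ = ∫⁻ x, F x ∂(μ.map (t • ·)) :=
        (lintegral_map_equiv F (Homeomorph.smulOfNeZero t ht.ne').toMeasurableEquiv).symm
    _ = _ := by
        rw [Measure.map_addHaar_smul μ ht.ne', lintegral_smul_measure,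
          abs_of_pos (by positivity), smul_eq_mul]

variable {μ} {N : E → ℝ} {g : E → ℝ≥0∞} {d : ℕ}

theorem setLIntegral_sublevel_eq_pow_mul (hN : Measurable N)
    (hN_smul : ∀ t : ℝ, 0 < t → ∀ x, N (t • x) = t * N x)
    (hg_smul : ∀ t : ℝ, 0 < t → ∀ x, g (t • x) = ENNReal.ofReal t ^ d * g x)
    {t : ℝ} (ht : 0 < t) :
    ∫⁻ x in {x | N x ≤ t}, g x ∂μ
      = ENNReal.ofReal t ^ (finrank ℝ E + d) * ∫⁻ x in {x | N x ≤ 1}, g x ∂μ := by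
  have h_ind (x : E) : {x | N x ≤ t}.indicator g (t • x)
      = {x | N x ≤ 1}.indicator (fun y => ENNReal.ofReal t ^ d * g y) x := by
    simp only [indicator, mem_ofPred_eq, hN_smul t ht, mul_le_iff_le_one_right ht, hg_smul t ht]
  have h_scaled := lintegral_comp_smul_of_pos μ ({x | N x ≤ t}.indicator g) ht
  simp only [h_ind, lintegral_indicator (measurableSet_le hN measurable_const)] at h_scaled
  rw [lintegral_const_mul' _ _ (by finiteness)] at h_scaled
  rw [pow_add, ← ENNReal.ofReal_pow ht.le, mul_assoc, h_scaled, ← mul_assoc,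
    ← ENNReal.ofReal_mul (by positivity), mul_inv_cancel₀ (by positivity), ENNReal.ofReal_one,
    one_mul]

theorem lintegral_mul_exp_neg_eq_factorial_mul (hN : Measurable N) (hN_nonneg : ∀ x, 0 ≤ N x)
    (hN_smul : ∀ t : ℝ, 0 < t → ∀ x, N (t • x) = t * N x) (hg : Measurable g)
    (hg_smul : ∀ t : ℝ, 0 < t → ∀ x, g (t • x) = ENNReal.ofReal t ^ d * g x) :
    ∫⁻ x, g x * ENNReal.ofReal (exp (-N x)) ∂μ
      = (finrank ℝ E + d)! * ∫⁻ x in {x | N x ≤ 1}, g x ∂μ := by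
  set F : E → ℝ → ℝ≥0∞ := fun x t =>
    {p : E × ℝ | N p.1 ≤ p.2}.indicator (fun p => g p.1 * ENNReal.ofReal (exp (-p.2))) (x, t)
  have hF : Measurable (Function.uncurry F) :=
    ((hg.comp measurable_fst).mul (by fun_prop)).indicator
      (measurableSet_le (hN.comp measurable_fst) measurable_snd)
  have h_slice_t (x : E) : g x * ENNReal.ofReal (exp (-N x)) = ∫⁻ t, F x t := by
    rw [ofReal_exp_neg_eq_setLIntegral_Ici, ← lintegral_const_mul _ (by fun_prop),
      ← lintegral_indicator measurableSet_Ici]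
    rfl
  have h_slice_x (t : ℝ) :
      ∫⁻ x, F x t ∂μ = ENNReal.ofReal (exp (-t)) * ∫⁻ x in {x | N x ≤ t}, g x ∂μ := by
    rw [← lintegral_const_mul' _ _ ENNReal.ofReal_ne_top,
      ← lintegral_indicator (measurableSet_le hN measurable_const)]
    refine lintegral_congr fun x => ?_
    simp only [F, indicator_apply, mem_ofPred_eq, mul_comm]
  have h_support : (fun t => ENNReal.ofReal (exp (-t)) * ∫⁻ x in {x | N x ≤ t}, g x ∂μ).support
      ⊆ Ici 0 := by
    refine Function.support_subset_iff'.mpr fun t (ht : ¬0 ≤ t) => ?_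
    have h_empty : {x | N x ≤ t} = ∅ :=
      eq_empty_of_forall_notMem fun x (hx : N x ≤ t) => ht ((hN_nonneg x).trans hx)
    simp [h_empty]
  calc ∫⁻ x, g x * ENNReal.ofReal (exp (-N x)) ∂μ = ∫⁻ x, (∫⁻ t, F x t) ∂μ :=
        lintegral_congr h_slice_t
    _ = ∫⁻ t, ∫⁻ x, F x t ∂μ := lintegral_lintegral_swap hF.aemeasurable
    _ = ∫⁻ t in Ioi 0, ENNReal.ofReal (exp (-t)) * ∫⁻ x in {x | N x ≤ t}, g x ∂μ := by
      simp only [h_slice_x]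
      rw [setLIntegral_congr Ioi_ae_eq_Ici, setLIntegral_eq_of_support_subset h_support]
    _ = ∫⁻ t in Ioi 0, ENNReal.ofReal (exp (-t)) * ENNReal.ofReal t ^ (finrank ℝ E + d)
          * ∫⁻ x in {x | N x ≤ 1}, g x ∂μ := by
      refine setLIntegral_congr_fun measurableSet_Ioi fun t ht => ?_
      rw [setLIntegral_sublevel_eq_pow_mul hN hN_smul hg_smul ht, mul_assoc]
    _ = _ := by
      rw [lintegral_mul_const _ (by fun_prop), setLIntegral_Ioi_exp_neg_mul_pow]

end HomogeneousWeight

section CrossPolytope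

variable {ι : Type*} [Fintype ι]

theorem lintegral_prod_abs_pow_mul_exp_neg (c : ι → ℕ) :
    ∫⁻ x : ι → ℝ, ENNReal.ofReal (∏ k, |x k| ^ c k) * ENNReal.ofReal (exp (-∑ k, |x k|))
      = ENNReal.ofReal (∏ k, 2 * (c k)! : ℝ) := by
  have h_factor (x : ι → ℝ) : ENNReal.ofReal (∏ k, |x k| ^ c k)
      * ENNReal.ofReal (exp (-∑ k, |x k|)) = ENNReal.ofReal (∏ k, exp (-|x k|) * |x k| ^ c k) := by
    rw [← ENNReal.ofReal_mul (by positivity), Finset.prod_mul_distrib, ← Finset.sum_neg_distrib,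
      exp_sum, mul_comm]
  have h_int (m : ℕ) : Integrable fun x : ℝ => exp (-|x|) * |x| ^ m :=
    .of_integral_ne_zero (by rw [integral_exp_neg_abs_mul_abs_pow]; positivity)
  simp_rw [h_factor]
  rw [volume_pi, ← ofReal_integral_eq_lintegral_ofReal (.fintype_prod fun k => h_int (c k))
    (.of_forall fun x => by positivity), integral_fintype_prod_eq_prod
    (fun k t => exp (-|t|) * |t| ^ c k)]
  simp only [integral_exp_neg_abs_mul_abs_pow]

theorem factorial_mul_setLIntegral_l1Ball (c : ι → ℕ) :
    ((Fintype.card ι + ∑ k, c k)! : ℝ≥0∞)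
        * ∫⁻ x in {x : ι → ℝ | ∑ k, |x k| ≤ 1}, ENNReal.ofReal (∏ k, |x k| ^ c k)
      = ENNReal.ofReal (∏ k, 2 * (c k)! : ℝ) := by
  rw [← finrank_fintype_fun_eq_card ℝ, ← lintegral_prod_abs_pow_mul_exp_neg c]
  refine (lintegral_mul_exp_neg_eq_factorial_mul (by fun_prop) (fun x => by positivity) ?_
    (by fun_prop) ?_).symm
  · intro t ht x
    simp [abs_mul, abs_of_pos ht, Finset.mul_sum]
  · intro t ht x
    simp only [Pi.smul_apply, smul_eq_mul, abs_mul, abs_of_pos ht, mul_pow,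
      Finset.prod_mul_distrib, Finset.prod_pow_eq_pow_sum]
    rw [ENNReal.ofReal_mul (by positivity), ENNReal.ofReal_pow ht.le]

theorem setIntegral_l1Ball_prod_abs_pow (c : ι → ℕ) :
    ∫ x in {x : ι → ℝ | ∑ k, |x k| ≤ 1}, ∏ k, |x k| ^ c k
      = (∏ k, 2 * (c k)! : ℝ) / (Fintype.card ι + ∑ k, c k)! := by
  rw [integral_eq_lintegral_of_nonneg_ae (.of_forall fun x => by positivity)
      (by fun_prop : Continuous _).aestronglyMeasurable,
    eq_div_iff (by positivity), mul_comm, ← ENNReal.toReal_natCast, ← ENNReal.toReal_mul,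
    factorial_mul_setLIntegral_l1Ball, ENNReal.toReal_ofReal (by positivity)]

theorem integral_prod_abs_pow_uniform_l1Ball (c : ι → ℕ) :
    ∫ x, ∏ k, |x k| ^ c k ∂((volume {x : ι → ℝ | ∑ k, |x k| ≤ 1})⁻¹
        • volume.restrict {x : ι → ℝ | ∑ k, |x k| ≤ 1})
      = (∏ k, (c k)! : ℝ) * (Fintype.card ι)! / (Fintype.card ι + ∑ k, c k)! := by
  have h_vol : (volume {x : ι → ℝ | ∑ k, |x k| ≤ 1}).toReal
      = 2 ^ Fintype.card ι / (Fintype.card ι)! := by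
    simpa [measureReal_def] using setIntegral_l1Ball_prod_abs_pow (0 : ι → ℕ)
  rw [integral_smul_measure, ENNReal.toReal_inv, h_vol, setIntegral_l1Ball_prod_abs_pow,
    smul_eq_mul, Finset.prod_mul_distrib, Finset.prod_const, Finset.card_univ]
  field_simp

end CrossPolytope

theorem stmt_2_general (n : ℕ) (i j : Fin n) (hij : i ≠ j)
    (B : Set (Fin n → ℝ)) (hB : B = {x : Fin n → ℝ | ∑ k, |x k| ≤ 1})
    (μ : Measure (Fin n → ℝ)) (hμ : μ = (volume B)⁻¹ • volume.restrict B) :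
    (∫ x, (x i) ^ 4 ∂μ)
        = 24 / (((n : ℝ) + 1) * (n + 2) * (n + 3) * (n + 4)) ∧
    (∫ x, (x i) ^ 2 * (x j) ^ 2 ∂μ)
        = 4 / (((n : ℝ) + 1) * (n + 2) * (n + 3) * (n + 4)) := by
  subst hB hμ
  have h_fact : ((n + 4)! : ℝ) = (n + 1) * (n + 2) * (n + 3) * (n + 4) * n ! := by
    push_cast [Nat.factorial_succ]
    ring
  constructor
  · have h_single (x : Fin n → ℝ) : ∏ k, |x k| ^ Pi.single i 4 k = x i ^ 4 := by
      rw [Fintype.prod_eq_single i fun k hk => by simp [hk]]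
      simp [Even.pow_abs ⟨2, rfl⟩]
    have h_moment := integral_prod_abs_pow_uniform_l1Ball (Pi.single i 4)
    simp only [h_single, Fintype.card_fin] at h_moment
    rw [h_moment, Fintype.prod_eq_single i fun k hk => by simp [hk],
      Fintype.sum_eq_single i fun k hk => by simp [hk], Pi.single_eq_same, h_fact]
    field_simp
    norm_num [Nat.factorial]
  · set c : Fin n → ℕ := Pi.single i 2 + Pi.single j 2
    have h_pair (x : Fin n → ℝ) : ∏ k, |x k| ^ c k = x i ^ 2 * x j ^ 2 := by
      rw [Fintype.prod_eq_mul i j hij fun k hk => by simp [c, hk.1, hk.2]]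
      simp [c, hij, hij.symm, Even.pow_abs ⟨1, rfl⟩]
    have h_moment := integral_prod_abs_pow_uniform_l1Ball c
    simp only [h_pair, Fintype.card_fin] at h_moment
    have h_ci : c i = 2 := by simp [c, hij]
    have h_cj : c j = 2 := by simp [c, hij.symm]
    rw [h_moment, Fintype.prod_eq_mul i j hij fun k hk => by simp [c, hk.1, hk.2],
      Fintype.sum_eq_add i j hij fun k hk => by simp [c, hk.1, hk.2], h_ci, h_cj, h_fact]
    field_simp
    norm_num [Nat.factorial]

theorem stmt_2 (n : ℕ) (hn : 2 ≤ n) (i j : Fin n) (hij : i ≠ j)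
    (B : Set (Fin n → ℝ)) (hB : B = {x : Fin n → ℝ | ∑ k, |x k| ≤ 1})
    (μ : Measure (Fin n → ℝ)) (hμ : μ = (volume B)⁻¹ • volume.restrict B) :
    (∫ x, (x i) ^ 4 ∂μ)
        = 24 / (((n : ℝ) + 1) * (n + 2) * (n + 3) * (n + 4)) ∧
    (∫ x, (x i) ^ 2 * (x j) ^ 2 ∂μ)
        = 4 / (((n : ℝ) + 1) * (n + 2) * (n + 3) * (n + 4)) :=
  stmt_2_general n i j hij B hB μ hμ
end

section
/- Let X be uniform on B_1^n (n ≥ 2) and let θ ∈ ℝ^n be a unit vector. Then E⟨θ,X⟩⁴ = 3·E[X_1²X_2²] + (E[X_1⁴] − 3·E[X_1²X_2²])·Σ_i θ_i⁴, and the coefficient E[X_1⁴] − 3·E[X_1²X_2²] = 12/((n+1)(n+2)(n+3)(n+4)) is strictly positive. -/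
open MeasureTheory Finset Set
open scoped Nat ProbabilityTheory

/-!
Reflecting a single coordinate preserves the uniform measure on the `ℓ¹` ball, so a monomial that
is odd in some coordinate has mean zero. Adding the coordinates of `⟨θ, x⟩` one at a time and
discarding the odd cross terms gives, for every such sign-symmetric law,
`E ⟨θ, X⟩⁴ = 3 ∑ᵢ ∑ₖ θᵢ² θₖ² E[Xᵢ² Xₖ²] - 2 ∑ᵢ θᵢ⁴ E[Xᵢ⁴]`.
The moments of the ball come from the Dirichlet-type formula
`∫_{‖x‖₁ ≤ r} ∏ |xᵢ|^pᵢ = 2ⁿ ∏ pᵢ! / (n + ∑ pᵢ)! · r^(n + ∑ pᵢ)`, proved by induction on `n`: the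
slice of the ball at first coordinate `t` is the ball of radius `r - |t|` one dimension lower, and
the remaining integral over `t` is a Beta integral. It gives `E X₁⁴ = 24 / ((n+1)⋯(n+4))` and
`E X₁² X₂² = 4 / ((n+1)⋯(n+4))`.
-/

section Reflection

variable {ι : Type*} [DecidableEq ι]

def reflect (r : ι) (x : ι → ℝ) : ι → ℝ := Function.update x r (-x r)

theorem reflect_apply_self (r : ι) (x : ι → ℝ) : reflect r x r = -x r :=
  Function.update_self r _ x

theorem reflect_apply_of_ne {r i : ι} (h : i ≠ r) (x : ι → ℝ) : reflect r x i = x i :=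
  Function.update_of_ne h _ x

theorem reflect_involutive (r : ι) : Function.Involutive (reflect r) := fun x => by
  ext i
  rcases eq_or_ne i r with rfl | h
  · simp [reflect_apply_self]
  · simp [reflect_apply_of_ne h]

theorem measurable_reflect (r : ι) : Measurable (reflect r) := by
  unfold reflect; fun_prop

theorem measurableEmbedding_reflect (r : ι) : MeasurableEmbedding (reflect r) :=
  (MeasurableEquiv.ofInvolutive _ (reflect_involutive r) (measurable_reflect r)).measurableEmbedding

theorem volume_preserving_reflect [Fintype ι] (r : ι) :
    MeasurePreserving (reflect r) (volume : Measure (ι → ℝ)) volume := by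
  have hf (i : ι) : MeasurePreserving (Function.update (fun _ => id) r Neg.neg i)
      (volume : Measure ℝ) volume := by
    rcases eq_or_ne i r with rfl | h
    · simpa using Measure.measurePreserving_neg (volume : Measure ℝ)
    · simpa [h] using MeasurePreserving.id (volume : Measure ℝ)
  have hr : reflect r = fun x i => Function.update (fun _ => id) r Neg.neg i (x i) := by
    ext x i
    rcases eq_or_ne i r with rfl | h
    · simp [reflect_apply_self]
    · simp [reflect_apply_of_ne h, h]
  rw [hr]
  exact volume_preserving_pi hf

theorem measurePreserving_reflect_cond [Fintype ι] {r : ι} {s : Set (ι → ℝ)}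
    (hs : reflect r ⁻¹' s = s) : MeasurePreserving (reflect r) (volume[|s]) (volume[|s]) := by
  have h := (volume_preserving_reflect r).restrict_preimage_emb (measurableEmbedding_reflect r) s
  rw [hs] at h
  exact h.smul_measure _

end Reflection

section SignSymmetric

variable {ι : Type*} [DecidableEq ι] {μ : Measure (ι → ℝ)} (θ : ι → ℝ)

theorem integral_eq_zero_of_comp_reflect_eq_neg {r : ι} (hμ : MeasurePreserving (reflect r) μ μ)
    {f : (ι → ℝ) → ℝ} (hf : ∀ x, f (reflect r x) = -f x) : ∫ x, f x ∂μ = 0 := by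
  have h := hμ.integral_comp (measurableEmbedding_reflect r) f
  simp only [hf, integral_neg] at h
  linarith

theorem integral_sum_mul_sq_mul (hμ : ∀ r, MeasurePreserving (reflect r) μ μ)
    (hint : ∀ f : (ι → ℝ) → ℝ, Continuous f → Integrable f μ) (s : Finset ι)
    {g : (ι → ℝ) → ℝ} (hg : Continuous g) (hgs : ∀ i ∈ s, ∀ x, g (reflect i x) = g x) :
    ∫ x, (∑ i ∈ s, θ i * x i) ^ 2 * g x ∂μ = ∑ i ∈ s, θ i ^ 2 * ∫ x, x i ^ 2 * g x ∂μ := by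
  induction s using Finset.induction_on with
  | empty => simp
  | insert r s hr ih =>
    set S : (ι → ℝ) → ℝ := fun x => ∑ i ∈ s, θ i * x i
    have hS (x : ι → ℝ) : S (reflect r x) = S x :=
      sum_congr rfl fun i hi => by rw [reflect_apply_of_ne (ne_of_mem_of_not_mem hi hr)]
    have hcross : ∫ x, 2 * (θ r * x r) * S x * g x ∂μ = 0 :=
      integral_eq_zero_of_comp_reflect_eq_neg (hμ r) fun x => by
        rw [reflect_apply_self, hS, hgs r (mem_insert_self r s)]; ring
    calc ∫ x, (∑ i ∈ insert r s, θ i * x i) ^ 2 * g x ∂μ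
        = ∫ x, θ r ^ 2 * (x r ^ 2 * g x) + 2 * (θ r * x r) * S x * g x + S x ^ 2 * g x ∂μ := by
          congr 1 with x
          rw [sum_insert hr]
          ring
      _ = θ r ^ 2 * ∫ x, x r ^ 2 * g x ∂μ + ∑ i ∈ s, θ i ^ 2 * ∫ x, x i ^ 2 * g x ∂μ := by
          rw [integral_add (hint _ (by fun_prop)) (hint _ (by fun_prop)),
            integral_add (hint _ (by fun_prop)) (hint _ (by fun_prop)), integral_const_mul,
            hcross, ih (fun i hi => hgs i (mem_insert_of_mem hi)), add_zero]
      _ = ∑ i ∈ insert r s, θ i ^ 2 * ∫ x, x i ^ 2 * g x ∂μ := by rw [sum_insert hr]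

theorem integral_sum_mul_pow_four (hμ : ∀ r, MeasurePreserving (reflect r) μ μ)
    (hint : ∀ f : (ι → ℝ) → ℝ, Continuous f → Integrable f μ) (s : Finset ι) :
    ∫ x, (∑ i ∈ s, θ i * x i) ^ 4 ∂μ
      = 3 * ∑ i ∈ s, ∑ k ∈ s, θ i ^ 2 * θ k ^ 2 * ∫ x, x i ^ 2 * x k ^ 2 ∂μ
        - 2 * ∑ i ∈ s, θ i ^ 4 * ∫ x, x i ^ 4 ∂μ := by
  induction s using Finset.induction_on with
  | empty => simp
  | insert r s hr ih =>
    set S : (ι → ℝ) → ℝ := fun x => ∑ i ∈ s, θ i * x i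
    have hS (x : ι → ℝ) : S (reflect r x) = S x :=
      sum_congr rfl fun i hi => by rw [reflect_apply_of_ne (ne_of_mem_of_not_mem hi hr)]
    have hodd : ∫ x, 4 * (θ r * x r) ^ 3 * S x + 4 * (θ r * x r) * S x ^ 3 ∂μ = 0 :=
      integral_eq_zero_of_comp_reflect_eq_neg (hμ r) fun x => by
        rw [reflect_apply_self, hS]; ring
    have hmixed : ∫ x, S x ^ 2 * (θ r ^ 2 * x r ^ 2) ∂μ
        = ∑ i ∈ s, θ i ^ 2 * ∫ x, x i ^ 2 * (θ r ^ 2 * x r ^ 2) ∂μ :=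
      integral_sum_mul_sq_mul θ hμ hint s (by fun_prop) fun i hi x => by
        rw [reflect_apply_of_ne (ne_of_mem_of_not_mem hi hr).symm]
    have hsymm (i : ι) : θ i ^ 2 * ∫ x, x i ^ 2 * (θ r ^ 2 * x r ^ 2) ∂μ
        = θ r ^ 2 * θ i ^ 2 * ∫ x, x r ^ 2 * x i ^ 2 ∂μ := by
      rw [← integral_const_mul, ← integral_const_mul]
      congr 1 with x
      ring
    have hswap (i : ι) : θ i ^ 2 * θ r ^ 2 * ∫ x, x i ^ 2 * x r ^ 2 ∂μ
        = θ r ^ 2 * θ i ^ 2 * ∫ x, x r ^ 2 * x i ^ 2 ∂μ := by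
      rw [mul_comm (θ i ^ 2)]
      congr 2 with x
      ring
    have hdiag : ∫ x, x r ^ 2 * x r ^ 2 ∂μ = ∫ x, x r ^ 4 ∂μ := by
      congr 1 with x
      ring
    calc ∫ x, (∑ i ∈ insert r s, θ i * x i) ^ 4 ∂μ
        = ∫ x, θ r ^ 4 * x r ^ 4 + (4 * (θ r * x r) ^ 3 * S x + 4 * (θ r * x r) * S x ^ 3)
            + 6 * (S x ^ 2 * (θ r ^ 2 * x r ^ 2)) + S x ^ 4 ∂μ := by
          congr 1 with x
          rw [sum_insert hr]
          ring
      _ = θ r ^ 4 * ∫ x, x r ^ 4 ∂μ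
            + 6 * ∑ i ∈ s, θ r ^ 2 * θ i ^ 2 * ∫ x, x r ^ 2 * x i ^ 2 ∂μ
            + ∫ x, S x ^ 4 ∂μ := by
          rw [integral_add (hint _ (by fun_prop)) (hint _ (by fun_prop)),
            integral_add (hint _ (by fun_prop)) (hint _ (by fun_prop)),
            integral_add (hint _ (by fun_prop)) (hint _ (by fun_prop)), integral_const_mul,
            integral_const_mul, hodd, hmixed, add_zero]
          simp only [hsymm]
      _ = _ := by
          rw [ih]
          simp only [sum_insert hr, hswap, sum_add_distrib, ← hdiag]
          ring

theorem integral_sum_mul_pow_four_of_moments [Fintype ι]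
    (hμ : ∀ r, MeasurePreserving (reflect r) μ μ)
    (hint : ∀ f : (ι → ℝ) → ℝ, Continuous f → Integrable f μ) {m₄ m₂₂ : ℝ}
    (h4 : ∀ i, ∫ x, x i ^ 4 ∂μ = m₄) (h22 : ∀ i k, i ≠ k → ∫ x, x i ^ 2 * x k ^ 2 ∂μ = m₂₂) :
    ∫ x, (∑ i, θ i * x i) ^ 4 ∂μ
      = 3 * m₂₂ * (∑ i, θ i ^ 2) ^ 2 + (m₄ - 3 * m₂₂) * ∑ i, θ i ^ 4 := by
  have hE (i k : ι) : ∫ x, x i ^ 2 * x k ^ 2 ∂μ = m₂₂ + if i = k then m₄ - m₂₂ else 0 := by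
    rcases eq_or_ne i k with rfl | h
    · rw [if_pos rfl, ← h4 i]
      simp only [← pow_add, add_sub_cancel]
    · rw [if_neg h, h22 i k h, add_zero]
  rw [integral_sum_mul_pow_four θ hμ hint univ]
  simp only [hE, h4, mul_add, mul_ite, mul_zero, sum_add_distrib, sum_ite_eq, Finset.mem_univ,
    ite_true]
  have hcross : ∑ i, ∑ k, θ i ^ 2 * θ k ^ 2 * m₂₂ = m₂₂ * (∑ i, θ i ^ 2) ^ 2 := by
    rw [sq, sum_mul_sum, mul_sum]
    simp only [mul_comm m₂₂, sum_mul]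
  have hdiag : ∑ i, θ i ^ 2 * θ i ^ 2 * (m₄ - m₂₂) = (m₄ - m₂₂) * ∑ i, θ i ^ 4 := by
    rw [mul_sum]
    congr 1 with i
    ring
  rw [hcross, hdiag, ← sum_mul]
  ring

end SignSymmetric

theorem integral_pow_mul_sub_pow (r : ℝ) (a b : ℕ) :
    ∫ t in (0 : ℝ)..r, t ^ a * (r - t) ^ b = a ! * b ! / (a + b + 1)! * r ^ (a + b + 1) := by
  induction b generalizing a with
  | zero =>
    simp only [pow_zero, mul_one, integral_pow, Nat.factorial_zero, Nat.cast_one, add_zero]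
    rw [zero_pow (Nat.succ_ne_zero a), Nat.factorial_succ]
    push_cast
    field_simp
    ring
  | succ b ih =>
    -- integration by parts moves one power from `r - t` to `t`
    have hu : ∀ t ∈ uIcc 0 r, HasDerivAt (fun t : ℝ => (r - t) ^ (b + 1))
        (-((b + 1 : ℕ) * (r - t) ^ b)) t := fun t _ =>
      (((hasDerivAt_id t).const_sub r).pow (b + 1)).congr_deriv (by simp)
    have hv : ∀ t ∈ uIcc 0 r, HasDerivAt (fun t : ℝ => t ^ (a + 1) / (a + 1 : ℕ)) (t ^ a) t :=
      fun t _ => ((hasDerivAt_pow (a + 1) t).div_const _).congr_deriv (by field_simp; simp)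
    have ibp := intervalIntegral.integral_mul_deriv_eq_deriv_mul hu hv
      (by apply Continuous.intervalIntegrable; fun_prop)
      (by apply Continuous.intervalIntegrable; fun_prop)
    simp only [sub_self, zero_pow (Nat.succ_ne_zero _), zero_mul, sub_zero, neg_mul,
      intervalIntegral.integral_neg, sub_neg_eq_add] at ibp
    calc ∫ t in (0 : ℝ)..r, t ^ a * (r - t) ^ (b + 1)
        = ∫ t in (0 : ℝ)..r, (b + 1 : ℕ) / (a + 1 : ℕ) * (t ^ (a + 1) * (r - t) ^ b) := by
          simp only [mul_comm _ ((r - _) ^ (b + 1)), ibp]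
          simp only [zero_div, mul_zero, sub_zero, zero_add]
          congr 1 with t
          ring
      _ = a ! * (b + 1)! / (a + (b + 1) + 1)! * r ^ (a + (b + 1) + 1) := by
          rw [intervalIntegral.integral_const_mul, ih, Nat.factorial_succ a, Nat.factorial_succ b,
            show a + 1 + b + 1 = a + (b + 1) + 1 by ring]
          push_cast
          field_simp

theorem setIntegral_Ioo_comp_abs (f : ℝ → ℝ) {r : ℝ} (hr : 0 ≤ r) :
    ∫ t in Ioo (-r) r, f |t| = 2 * ∫ t in (0 : ℝ)..r, f t := by
  calc ∫ t in Ioo (-r) r, f |t| = ∫ t, (Iio r).indicator f |t| := by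
        rw [← integral_indicator measurableSet_Ioo]
        congr 1 with t
        simp only [indicator, Set.mem_Ioo, Set.mem_Iio, abs_lt]
    _ = 2 * ∫ t in Ioi 0, (Iio r).indicator f t := integral_comp_abs
    _ = 2 * ∫ t in (0 : ℝ)..r, f t := by
        rw [setIntegral_indicator measurableSet_Iio, Ioi_inter_Iio,
          intervalIntegral.integral_of_le hr, integral_Ioc_eq_integral_Ioo]

theorem integral_fin_succ_eq_integral_cons {n : ℕ} {f : (Fin (n + 1) → ℝ) → ℝ}
    (hf : Integrable f) : ∫ x, f x = ∫ t, ∫ y, f (Fin.cons t y) := by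
  have e := (volume_preserving_piFinSuccAbove (fun _ : Fin (n + 1) => ℝ) 0).symm
  rw [← e.integral_comp', Measure.volume_eq_prod, integral_prod]
  · simp only [MeasurableEquiv.piFinSuccAbove_symm_apply, Fin.insertNthEquiv, Equiv.coe_fn_mk,
      Fin.insertNth_zero']
  · rw [← Measure.volume_eq_prod]
    exact e.integrable_comp_emb (MeasurableEquiv.measurableEmbedding _) |>.2 hf

def l1Ball (ι : Type*) [Fintype ι] (r : ℝ) : Set (ι → ℝ) := {x | ∑ i, |x i| ≤ r}

theorem isClosed_l1Ball (ι : Type*) [Fintype ι] (r : ℝ) : IsClosed (l1Ball ι r) :=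
  isClosed_le (by fun_prop) continuous_const

theorem isCompact_l1Ball (ι : Type*) [Fintype ι] (r : ℝ) : IsCompact (l1Ball ι r) := by
  refine Metric.isCompact_of_isClosed_isBounded (isClosed_l1Ball ι r) ?_
  refine (Metric.isBounded_iff_subset_closedBall 0).2 ⟨r, fun x hx => ?_⟩
  have hr : 0 ≤ r := (sum_nonneg fun _ _ => abs_nonneg _).trans hx
  rw [mem_closedBall_zero_iff, pi_norm_le_iff_of_nonneg hr]
  exact fun i => (single_le_sum (fun j _ => abs_nonneg (x j)) (Finset.mem_univ i)).trans hx

theorem l1Ball_eq_empty {ι : Type*} [Fintype ι] {r : ℝ} (hr : r < 0) : l1Ball ι r = ∅ :=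
  eq_empty_of_forall_notMem fun _ hx => hr.not_ge ((sum_nonneg fun _ _ => abs_nonneg _).trans hx)

theorem cons_mem_l1Ball_iff {n : ℕ} {r t : ℝ} {y : Fin n → ℝ} :
    (Fin.cons t y : Fin (n + 1) → ℝ) ∈ l1Ball (Fin (n + 1)) r ↔ y ∈ l1Ball (Fin n) (r - |t|) := by
  simp only [l1Ball, mem_ofPred_eq, Fin.sum_univ_succ, Fin.cons_zero, Fin.cons_succ]
  constructor <;> intro h <;> linarith

theorem reflect_preimage_l1Ball {ι : Type*} [Fintype ι] [DecidableEq ι] (r : ι) (ρ : ℝ) :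
    reflect r ⁻¹' l1Ball ι ρ = l1Ball ι ρ := by
  ext x
  have h (i : ι) : |reflect r x i| = |x i| := by
    rcases eq_or_ne i r with rfl | h
    · rw [reflect_apply_self, abs_neg]
    · rw [reflect_apply_of_ne h]
  simp only [l1Ball, Set.mem_preimage, mem_ofPred_eq, h]

theorem integral_l1Ball_succ {n : ℕ} (r : ℝ) {F : (Fin (n + 1) → ℝ) → ℝ} (hF : Continuous F) :
    ∫ x in l1Ball (Fin (n + 1)) r, F x
      = ∫ t, ∫ y in l1Ball (Fin n) (r - |t|), F (Fin.cons t y) := by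
  have hint : Integrable ((l1Ball (Fin (n + 1)) r).indicator F) :=
    (integrable_indicator_iff (isClosed_l1Ball _ r).measurableSet).2
      (hF.continuousOn.integrableOn_compact (isCompact_l1Ball _ r))
  rw [← integral_indicator (isClosed_l1Ball _ r).measurableSet,
    integral_fin_succ_eq_integral_cons hint]
  congr 1 with t
  rw [← integral_indicator (isClosed_l1Ball _ _).measurableSet]
  congr 1 with y
  by_cases hy : y ∈ l1Ball (Fin n) (r - |t|)
  · rw [indicator_of_mem (cons_mem_l1Ball_iff.2 hy), indicator_of_mem hy]
  · rw [indicator_of_notMem (mt cons_mem_l1Ball_iff.1 hy), indicator_of_notMem hy]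

theorem integral_l1Ball_prod_abs_pow (n : ℕ) (p : Fin n → ℕ) {r : ℝ} (hr : 0 < r) :
    ∫ x in l1Ball (Fin n) r, ∏ i, |x i| ^ p i
      = 2 ^ n * (∏ i, ((p i)! : ℝ)) / (n + ∑ i, p i)! * r ^ (n + ∑ i, p i) := by
  induction n generalizing r with
  | zero =>
    have : l1Ball (Fin 0) r = univ := eq_univ_of_forall fun x => by simp [l1Ball, hr.le]
    simp [this, measureReal_def, volume_pi]
  | succ n ih =>
    set q : Fin n → ℕ := fun i => p i.succ
    set m := n + ∑ i, q i
    set C : ℝ := 2 ^ n * (∏ i, ((q i)! : ℝ)) / (m ! : ℝ)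
    set h : ℝ → ℝ := fun t => |t| ^ p 0 * ∫ y in l1Ball (Fin n) (r - |t|), ∏ i, |y i| ^ q i
    have hout : ∀ t ∉ Icc (-r) r, h t = 0 := fun t ht => by
      have : r - |t| < 0 := by rw [Set.mem_Icc, ← abs_le] at ht; linarith
      simp [h, l1Ball_eq_empty this]
    have hin : EqOn h (fun t => C * (|t| ^ p 0 * (r - |t|) ^ m)) (Ioo (-r) r) := fun t ht => by
      have : 0 < r - |t| := by rw [Set.mem_Ioo, ← abs_lt] at ht; linarith
      simp only [h, ih q this, C, m]
      ring
    calc ∫ x in l1Ball (Fin (n + 1)) r, ∏ i, |x i| ^ p i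
        = ∫ t, h t := by
          rw [integral_l1Ball_succ r (by fun_prop)]
          simp only [Fin.prod_univ_succ, Fin.cons_zero, Fin.cons_succ, integral_const_mul, h, q]
      _ = ∫ t in Ioo (-r) r, C * (|t| ^ p 0 * (r - |t|) ^ m) := by
          rw [← setIntegral_eq_integral_of_forall_compl_eq_zero hout, integral_Icc_eq_integral_Ioo,
            setIntegral_congr_fun measurableSet_Ioo hin]
      _ = C * (2 * ((p 0)! * m ! / (p 0 + m + 1)! * r ^ (p 0 + m + 1))) := by
          rw [integral_const_mul, setIntegral_Ioo_comp_abs (fun s => s ^ p 0 * (r - s) ^ m) hr.le,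
            integral_pow_mul_sub_pow]
      _ = _ := by
          have hm : n + 1 + ∑ i, p i = p 0 + m + 1 := by
            simp only [m, q, Fin.sum_univ_succ]; ring
          rw [hm, Fin.prod_univ_succ]
          simp only [C]
          field_simp
          ring

theorem volume_l1Ball_toReal (n : ℕ) {r : ℝ} (hr : 0 < r) :
    (volume (l1Ball (Fin n) r)).toReal = 2 ^ n / n ! * r ^ n := by
  simpa [measureReal_def] using integral_l1Ball_prod_abs_pow n 0 hr

section UniformL1Ball

variable {n : ℕ}

theorem integral_cond_l1Ball (f : (Fin n → ℝ) → ℝ) :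
    ∫ x, f x ∂volume[|l1Ball (Fin n) 1] = n ! / 2 ^ n * ∫ x in l1Ball (Fin n) 1, f x := by
  rw [ProbabilityTheory.cond, integral_smul_measure, ENNReal.toReal_inv,
    volume_l1Ball_toReal n one_pos]
  simp

theorem integrable_cond_l1Ball {f : (Fin n → ℝ) → ℝ} (hf : Continuous f) :
    Integrable f (volume[|l1Ball (Fin n) 1]) := by
  refine (hf.continuousOn.integrableOn_compact (isCompact_l1Ball _ 1)).smul_measure ?_
  refine ENNReal.inv_ne_top.2 fun h => ?_
  have := volume_l1Ball_toReal n one_pos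
  rw [h, ENNReal.toReal_zero, one_pow, mul_one] at this
  exact (by positivity : (0 : ℝ) < 2 ^ n / n !).ne this

theorem integral_l1Ball_prod_pow_even (s : Finset (Fin n)) (a : ℕ) :
    ∫ x in l1Ball (Fin n) 1, ∏ m ∈ s, x m ^ (2 * a)
      = 2 ^ n * ((2 * a)! : ℝ) ^ #s / (n + 2 * a * #s)! := by
  have h := integral_l1Ball_prod_abs_pow n (fun m => if m ∈ s then 2 * a else 0) one_pos
  simp only [pow_ite, pow_zero, apply_ite Nat.factorial, Nat.factorial_zero, Nat.cast_ite,
    Nat.cast_one, prod_ite_mem, Finset.univ_inter, sum_ite_mem, sum_const, prod_const, one_pow,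
    smul_eq_mul, mul_one, (even_two_mul a).pow_abs] at h
  rw [h, mul_comm (#s)]

theorem integral_cond_l1Ball_pow_four (i : Fin n) :
    ∫ x, x i ^ 4 ∂volume[|l1Ball (Fin n) 1] = 24 / ((n + 1) * (n + 2) * (n + 3) * (n + 4)) := by
  have h := integral_l1Ball_prod_pow_even {i} 2
  norm_num [Nat.factorial] at h
  rw [integral_cond_l1Ball, h]
  field_simp
  ring

theorem integral_cond_l1Ball_sq_mul_sq {i k : Fin n} (hik : i ≠ k) :
    ∫ x, x i ^ 2 * x k ^ 2 ∂volume[|l1Ball (Fin n) 1]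
      = 4 / ((n + 1) * (n + 2) * (n + 3) * (n + 4)) := by
  have h := integral_l1Ball_prod_pow_even {i, k} 1
  norm_num [prod_pair hik, card_pair hik, Nat.factorial] at h
  rw [integral_cond_l1Ball, h]
  field_simp
  ring

end UniformL1Ball

theorem stmt_3 (n : ℕ) (hn : 2 ≤ n) (θ : Fin n → ℝ) (hθ : ∑ i, (θ i) ^ 2 = 1)
    (B : Set (Fin n → ℝ)) (hB : B = {x : Fin n → ℝ | ∑ k, |x k| ≤ 1})
    (μ : Measure (Fin n → ℝ)) (hμ : μ = (volume B)⁻¹ • volume.restrict B) :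
    (∫ x, (∑ i, θ i * x i) ^ 4 ∂μ)
        = 3 * (∫ x, (x ⟨0, by omega⟩) ^ 2 * (x ⟨1, by omega⟩) ^ 2 ∂μ)
          + ((∫ x, (x ⟨0, by omega⟩) ^ 4 ∂μ)
              - 3 * (∫ x, (x ⟨0, by omega⟩) ^ 2 * (x ⟨1, by omega⟩) ^ 2 ∂μ))
            * ∑ i, (θ i) ^ 4 ∧
    (∫ x, (x ⟨0, by omega⟩) ^ 4 ∂μ)
        - 3 * (∫ x, (x ⟨0, by omega⟩) ^ 2 * (x ⟨1, by omega⟩) ^ 2 ∂μ)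
      = 12 / (((n : ℝ) + 1) * (n + 2) * (n + 3) * (n + 4)) ∧
    0 < (∫ x, (x ⟨0, by omega⟩) ^ 4 ∂μ)
        - 3 * (∫ x, (x ⟨0, by omega⟩) ^ 2 * (x ⟨1, by omega⟩) ^ 2 ∂μ) := by
  obtain rfl : μ = volume[|l1Ball (Fin n) 1] := hμ.trans (by rw [hB]; rfl)
  have h22 (i k : Fin n) (hik : i ≠ k) := integral_cond_l1Ball_sq_mul_sq hik
  rw [integral_sum_mul_pow_four_of_moments θ
      (fun r => measurePreserving_reflect_cond (reflect_preimage_l1Ball r 1))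
      (fun _ => integrable_cond_l1Ball) integral_cond_l1Ball_pow_four h22,
    hθ, integral_cond_l1Ball_pow_four, h22 _ _ (by simp [Fin.ext_iff])]
  set Q : ℝ := (n + 1) * (n + 2) * (n + 3) * (n + 4)
  have hcoef : 24 / Q - 3 * (4 / Q) = 12 / Q := by ring
  exact ⟨by ring, hcoef, hcoef ▸ by positivity⟩
end

section
/- Let μ be a nonzero finite signed measure on [0,1] with a density whose sign pattern is +,−,+ (positive on (0,a), negative on (a,b), positive on (b,1), allowing degenerate cases a = 0 or b = 1). Assume ∫₀¹ dμ = 0 and ∫₀¹ x dμ(x) ≤ 0. Then ∫₀¹ φ(x) dμ(x) > 0 for every strictly decreasing, strictly convex C¹ function φ on [0,1]. -/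
/-!
Write `K x = ∫₀ˣ ρ` and `g = φ'`. Fubini gives `∫ φ ρ = φ 1 ∫ ρ - ∫ g K = -∫ g K` and
`∫ K = ∫ ρ - ∫ x ρ ≥ 0`. The sign pattern of `ρ` makes `K` increase, decrease and increase again,
so, as `K 0 = K 1 = 0`, `K` has a zero `c` with `K ≥ 0` on `[0, c]` and `K ≤ 0` on `[c, 1]`.
As `g` is strictly increasing, `(g c - g) K ≥ 0` and is not identically zero, whence
`∫ φ ρ = ∫ (g c - g) K - g c ∫ K > 0` because `g c ≤ 0`.
-/

open MeasureTheory Set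

section Primitive

variable {ρ : ℝ → ℝ} {α β : ℝ}

theorem integral_mul_primitive_eq (hαβ : α ≤ β) (hρ : IntervalIntegrable ρ volume α β)
    {w : ℝ → ℝ} (hw : IntervalIntegrable w volume α β) :
    ∫ x in α..β, w x * ∫ t in α..x, ρ t = ∫ t in α..β, ρ t * ∫ x in t..β, w x := by
  set F : ℝ × ℝ → ℝ := {q : ℝ × ℝ | q.2 ≤ q.1}.indicator fun q => w q.1 * ρ q.2
  have hF : Integrable F ((volume.restrict (Ioc α β)).prod (volume.restrict (Ioc α β))) :=
    (hw.1.mul_prod hρ.1).indicator (measurableSet_le measurable_snd measurable_fst)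
  rw [intervalIntegral.integral_of_le hαβ, intervalIntegral.integral_of_le hαβ]
  convert integral_integral_swap (f := fun x t => F (x, t)) hF using 1
  · refine setIntegral_congr_fun measurableSet_Ioc fun x hx => ?_
    have hFx : (fun t => F (x, t)) = (Iic x).indicator fun t => w x * ρ t := by
      ext t; by_cases h : t ≤ x <;> simp [F, h]
    rw [hFx, setIntegral_indicator measurableSet_Iic, Ioc_inter_Iic, inf_eq_right.2 hx.2,
      MeasureTheory.integral_const_mul, intervalIntegral.integral_of_le hx.1.le]
  · refine setIntegral_congr_fun measurableSet_Ioc fun t ht => ?_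
    have hFt : (fun x => F (x, t)) = (Ici t).indicator fun x => w x * ρ t := by
      ext x; by_cases h : t ≤ x <;> simp [F, h]
    have hset : Ioc α β ∩ Ici t = Icc t β := by
      ext x; simp only [mem_inter_iff, mem_Ioc, mem_Ici, mem_Icc]
      constructor
      · rintro ⟨⟨-, hxβ⟩, htx⟩; exact ⟨htx, hxβ⟩
      · rintro ⟨htx, hxβ⟩; exact ⟨⟨ht.1.trans_le htx, hxβ⟩, htx⟩
    rw [hFt, setIntegral_indicator measurableSet_Ici, hset, integral_Icc_eq_integral_Ioc,
      MeasureTheory.integral_mul_const, intervalIntegral.integral_of_le ht.2, mul_comm]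

theorem integral_derivWithin_eq_sub {φ : ℝ → ℝ} (hφ : ContDiffOn ℝ 1 φ (Icc α β)) {t : ℝ}
    (ht : t ∈ Icc α β) : ∫ x in t..β, derivWithin φ (Icc α β) x = φ β - φ t := by
  rcases ht.2.eq_or_lt with rfl | htβ
  · simp
  have hsub : Icc t β ⊆ Icc α β := Icc_subset_Icc_left ht.1
  refine intervalIntegral.integral_eq_sub_of_hasDerivAt_of_le ht.2 (hφ.continuousOn.mono hsub)
    (fun x hx => ?_) ?_
  · have hxαβ : Icc α β ∈ nhds x := Icc_mem_nhds (ht.1.trans_lt hx.1) hx.2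
    exact (hφ.differentiableOn one_ne_zero x (mem_of_mem_nhds hxαβ)).hasDerivWithinAt.hasDerivAt
      hxαβ
  · refine ContinuousOn.intervalIntegrable ?_
    rw [uIcc_of_le ht.2]
    exact (hφ.continuousOn_derivWithin (uniqueDiffOn_Icc (ht.1.trans_lt htβ)) le_rfl).mono hsub

theorem integral_derivWithin_mul_primitive_eq (hαβ : α ≤ β) (hρ : IntervalIntegrable ρ volume α β)
    {φ : ℝ → ℝ} (hφ : ContDiffOn ℝ 1 φ (Icc α β)) :
    ∫ x in α..β, derivWithin φ (Icc α β) x * ∫ t in α..x, ρ t =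
      φ β * (∫ t in α..β, ρ t) - ∫ t in α..β, φ t * ρ t := by
  rcases hαβ.eq_or_lt with rfl | hαβ'
  · simp
  have hg : ContinuousOn (derivWithin φ (Icc α β)) (uIcc α β) := by
    rw [uIcc_of_le hαβ]
    exact hφ.continuousOn_derivWithin (uniqueDiffOn_Icc hαβ') le_rfl
  rw [integral_mul_primitive_eq hαβ hρ hg.intervalIntegrable,
    ← intervalIntegral.integral_const_mul, ← intervalIntegral.integral_sub (hρ.const_mul _)
      (hρ.continuousOn_mul (by rw [uIcc_of_le hαβ]; exact hφ.continuousOn))]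
  refine intervalIntegral.integral_congr fun t ht => ?_
  rw [uIcc_of_le hαβ] at ht
  simp only [integral_derivWithin_eq_sub hφ ht]
  ring

theorem integral_primitive_eq (hαβ : α ≤ β) (hρ : IntervalIntegrable ρ volume α β) :
    ∫ x in α..β, ∫ t in α..x, ρ t = β * (∫ t in α..β, ρ t) - ∫ t in α..β, t * ρ t := by
  have := integral_mul_primitive_eq hαβ hρ (w := fun _ => 1) intervalIntegrable_const
  simp only [one_mul, intervalIntegral.integral_const, smul_eq_mul, mul_one] at this
  rw [this, ← intervalIntegral.integral_const_mul,
    ← intervalIntegral.integral_sub (hρ.const_mul _)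
      (hρ.continuousOn_mul (g := fun t => t) continuousOn_id)]
  congr 1; ext t; ring

theorem continuousOn_primitive_Icc_of_intervalIntegrable (hαβ : α ≤ β)
    (hρ : IntervalIntegrable ρ volume α β) :
    ContinuousOn (fun x => ∫ t in α..x, ρ t) (Icc α β) := by
  simpa only [uIcc_of_le hαβ] using
    intervalIntegral.continuousOn_primitive_interval' hρ left_mem_uIcc

theorem strictMonoOn_primitive {p q : ℝ} (hαp : α ≤ p) (hρ : IntervalIntegrable ρ volume α q)
    (hpos : ∀ x ∈ Ioo p q, 0 < ρ x) : StrictMonoOn (fun x => ∫ t in α..x, ρ t) (Icc p q) := by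
  have hint : ∀ z ∈ Icc p q, IntervalIntegrable ρ volume α z := fun z hz =>
    hρ.mono_set (uIcc_subset_uIcc left_mem_uIcc (mem_uIcc_of_le (hαp.trans hz.1) hz.2))
  intro x hx y hy hxy
  rw [← sub_pos, intervalIntegral.integral_interval_sub_left (hint y hy) (hint x hx)]
  exact intervalIntegral.intervalIntegral_pos_of_pos_on ((hint x hx).symm.trans (hint y hy))
    (fun z hz => hpos z ⟨hx.1.trans_lt hz.1, hz.2.trans_le hy.2⟩) hxy

theorem strictAntiOn_primitive {p q : ℝ} (hαp : α ≤ p) (hρ : IntervalIntegrable ρ volume α q)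
    (hneg : ∀ x ∈ Ioo p q, ρ x < 0) : StrictAntiOn (fun x => ∫ t in α..x, ρ t) (Icc p q) := by
  simpa using (strictMonoOn_primitive hαp hρ.neg fun x hx => neg_pos.2 (hneg x hx)).neg

theorem exists_sign_change_of_monotoneOn_antitoneOn_monotoneOn {K : ℝ → ℝ} {p a b q : ℝ}
    (hpa : p ≤ a) (hab : a ≤ b) (hbq : b ≤ q) (hKp : K p = 0) (hKq : K q = 0)
    (hmono₁ : MonotoneOn K (Icc p a)) (hanti : AntitoneOn K (Icc a b))
    (hmono₂ : MonotoneOn K (Icc b q)) (hK : ContinuousOn K (Icc a b)) :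
    ∃ c ∈ Icc a b, K c = 0 ∧ (∀ x ∈ Icc p c, 0 ≤ K x) ∧ ∀ x ∈ Icc c q, K x ≤ 0 := by
  have hKa : 0 ≤ K a := hKp ▸ hmono₁ ⟨le_rfl, hpa⟩ ⟨hpa, le_rfl⟩ hpa
  have hKb : K b ≤ 0 := hKq ▸ hmono₂ ⟨le_rfl, hbq⟩ ⟨hbq, le_rfl⟩ hbq
  obtain ⟨c, hc, hKc⟩ := intermediate_value_Icc' hab hK ⟨hKb, hKa⟩
  refine ⟨c, hc, hKc, fun x hx => ?_, fun x hx => ?_⟩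
  · rcases le_total x a with hxa | hax
    · exact hKp ▸ hmono₁ ⟨le_rfl, hpa⟩ ⟨hx.1, hxa⟩ hx.1
    · exact hKc ▸ hanti ⟨hax, hx.2.trans hc.2⟩ hc hx.2
  · rcases le_total b x with hbx | hxb
    · exact hKq ▸ hmono₂ ⟨hbx, hx.2⟩ ⟨hbq, le_rfl⟩ hx.2
    · exact hKc ▸ hanti hc ⟨hc.1.trans hx.1, hxb⟩ hx.1

theorem integral_mul_lt_mul_integral_of_sign_change {K g : ℝ → ℝ} {c : ℝ} (hαβ : α < β)
    (hK : ContinuousOn K (Icc α β)) (hg : ContinuousOn g (Icc α β))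
    (hgm : StrictMonoOn g (Icc α β)) (hc : c ∈ Icc α β) (hKc : K c = 0)
    (hKpos : ∀ x ∈ Icc α c, 0 ≤ K x) (hKneg : ∀ x ∈ Icc c β, K x ≤ 0)
    (hne : ∃ x ∈ Icc α β, K x ≠ 0) :
    ∫ x in α..β, g x * K x < g c * ∫ x in α..β, K x := by
  have hprod : ∀ x ∈ Icc α β, 0 ≤ (g c - g x) * K x := by
    intro x hx
    rcases le_total x c with hxc | hcx
    · exact mul_nonneg (sub_nonneg.2 (hgm.monotoneOn hx hc hxc)) (hKpos x ⟨hx.1, hxc⟩)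
    · exact mul_nonneg_of_nonpos_of_nonpos (sub_nonpos.2 (hgm.monotoneOn hc hx hcx))
        (hKneg x ⟨hcx, hx.2⟩)
  have hpos : 0 < ∫ x in α..β, (g c - g x) * K x := by
    obtain ⟨x, hx, hKx⟩ := hne
    have hxc : x ≠ c := fun h => hKx (h ▸ hKc)
    refine intervalIntegral.integral_pos hαβ ((continuousOn_const.sub hg).mul hK)
      (fun y hy => hprod y (Ioc_subset_Icc_self hy)) ⟨x, hx, (hprod x hx).lt_of_ne ?_⟩
    exact (mul_ne_zero (sub_ne_zero.2 (hgm.injOn.ne hc hx hxc.symm)) hKx).symm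
  have hIcc : uIcc α β = Icc α β := uIcc_of_le hαβ.le
  rw [← intervalIntegral.integral_const_mul, ← sub_pos, ← intervalIntegral.integral_sub]
  · simpa only [sub_mul] using hpos
  all_goals exact ContinuousOn.intervalIntegrable (by rw [hIcc]; fun_prop)

theorem exists_sign_change_primitive (hαβ : α < β) (hρ : IntervalIntegrable ρ volume α β)
    {a b : ℝ} (hαa : α ≤ a) (hab : a ≤ b) (hbβ : b ≤ β) (hpos₁ : ∀ x ∈ Ioo α a, 0 < ρ x)
    (hneg : ∀ x ∈ Ioo a b, ρ x < 0) (hpos₂ : ∀ x ∈ Ioo b β, 0 < ρ x)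
    (hmass : ∫ t in α..β, ρ t = 0) :
    ∃ c ∈ Icc α β, ∫ t in α..c, ρ t = 0 ∧ (∀ x ∈ Icc α c, 0 ≤ ∫ t in α..x, ρ t) ∧
      (∀ x ∈ Icc c β, ∫ t in α..x, ρ t ≤ 0) ∧ ∃ x ∈ Icc α β, ∫ t in α..x, ρ t ≠ 0 := by
  have hρ_to : ∀ q ∈ Icc α β, IntervalIntegrable ρ volume α q := fun q hq =>
    hρ.mono_set (uIcc_subset_uIcc left_mem_uIcc (mem_uIcc_of_le hq.1 hq.2))
  have hmono₁ := strictMonoOn_primitive le_rfl (hρ_to a ⟨hαa, hab.trans hbβ⟩) hpos₁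
  have hanti := strictAntiOn_primitive hαa (hρ_to b ⟨hαa.trans hab, hbβ⟩) hneg
  have hmono₂ := strictMonoOn_primitive (hαa.trans hab) hρ hpos₂
  obtain ⟨c, hc, hKc, hKpos, hKneg⟩ :=
    exists_sign_change_of_monotoneOn_antitoneOn_monotoneOn hαa hab hbβ
      intervalIntegral.integral_same hmass hmono₁.monotoneOn hanti.antitoneOn hmono₂.monotoneOn
      ((continuousOn_primitive_Icc_of_intervalIntegrable hαβ.le hρ).mono (Icc_subset_Icc hαa hbβ))
  refine ⟨c, ⟨hαa.trans hc.1, hc.2.trans hbβ⟩, hKc, hKpos, hKneg, ?_⟩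
  by_contra! hzero
  have hα := hzero α ⟨le_rfl, hαβ.le⟩
  have ha := hzero a ⟨hαa, hab.trans hbβ⟩
  have hb := hzero b ⟨hαa.trans hab, hbβ⟩
  have hβ := hzero β ⟨hαβ.le, le_rfl⟩
  rcases hαa.lt_or_eq with hαa' | rfl
  · simpa [hα, ha] using hmono₁ ⟨le_rfl, hαa⟩ ⟨hαa, le_rfl⟩ hαa'
  rcases hab.lt_or_eq with hab' | rfl
  · simpa [ha, hb] using hanti ⟨le_rfl, hab⟩ ⟨hab, le_rfl⟩ hab'
  · simpa [hb, hβ] using hmono₂ ⟨le_rfl, hbβ⟩ ⟨hbβ, le_rfl⟩ hαβ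

end Primitive

theorem stmt_7_general (ρ : ℝ → ℝ) (hρ : IntegrableOn ρ (Set.Icc 0 1))
    (a b : ℝ) (ha0 : 0 ≤ a) (hab : a ≤ b) (hb1 : b ≤ 1)
    (hpos1 : ∀ x ∈ Set.Ioo (0 : ℝ) a, 0 < ρ x)
    (hneg : ∀ x ∈ Set.Ioo a b, ρ x < 0)
    (hpos2 : ∀ x ∈ Set.Ioo b (1 : ℝ), 0 < ρ x)
    (hmass : ∫ x in Set.Icc (0 : ℝ) 1, ρ x = 0)
    (hmom : ∫ x in Set.Icc (0 : ℝ) 1, x * ρ x ≤ 0)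
    (φ : ℝ → ℝ) (hφc : ContDiffOn ℝ 1 φ (Set.Icc 0 1))
    (hφdec : StrictAntiOn φ (Set.Icc 0 1))
    (hφconv : StrictConvexOn ℝ (Set.Icc 0 1) φ) :
    0 < ∫ x in Set.Icc (0 : ℝ) 1, φ x * ρ x := by
  simp only [integral_Icc_eq_integral_Ioc, ← intervalIntegral.integral_of_le zero_le_one]
    at hmass hmom ⊢
  have hρ' : IntervalIntegrable ρ volume 0 1 :=
    (intervalIntegrable_iff_integrableOn_Icc_of_le zero_le_one).2 hρ
  obtain ⟨c, hc, hKc, hKpos, hKneg, hne⟩ :=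
    exists_sign_change_primitive zero_lt_one hρ' ha0 hab hb1 hpos1 hneg hpos2 hmass
  have key := integral_mul_lt_mul_integral_of_sign_change zero_lt_one
    (continuousOn_primitive_Icc_of_intervalIntegrable zero_le_one hρ')
    (hφc.continuousOn_derivWithin (uniqueDiffOn_Icc zero_lt_one) le_rfl)
    (hφconv.strictMonoOn_derivWithin (hφc.differentiableOn one_ne_zero)) hc hKc hKpos hKneg hne
  rw [integral_derivWithin_mul_primitive_eq zero_le_one hρ' hφc,
    integral_primitive_eq zero_le_one hρ', hmass] at key
  have hgc : derivWithin φ (Icc 0 1) c ≤ 0 := hφdec.antitoneOn.derivWithin_nonpos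
  linarith [mul_nonpos_of_nonpos_of_nonneg hgc (neg_nonneg.2 hmom)]

theorem stmt_7 (ρ : ℝ → ℝ) (hρ : IntegrableOn ρ (Set.Icc 0 1))
    (a b : ℝ) (ha0 : 0 ≤ a) (hab : a ≤ b) (hb1 : b ≤ 1)
    (hpos1 : ∀ x ∈ Set.Ioo (0 : ℝ) a, 0 < ρ x)
    (hneg : ∀ x ∈ Set.Ioo a b, ρ x < 0)
    (hpos2 : ∀ x ∈ Set.Ioo b (1 : ℝ), 0 < ρ x)
    (hnonzero : ¬ (∀ᵐ x ∂volume.restrict (Set.Icc (0 : ℝ) 1), ρ x = 0))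
    (hmass : ∫ x in Set.Icc (0 : ℝ) 1, ρ x = 0)
    (hmom : ∫ x in Set.Icc (0 : ℝ) 1, x * ρ x ≤ 0)
    (φ : ℝ → ℝ) (hφc : ContDiffOn ℝ 1 φ (Set.Icc 0 1))
    (hφdec : StrictAntiOn φ (Set.Icc 0 1))
    (hφconv : StrictConvexOn ℝ (Set.Icc 0 1) φ) :
    0 < ∫ x in Set.Icc (0 : ℝ) 1, φ x * ρ x :=
  stmt_7_general ρ hρ a b ha0 hab hb1 hpos1 hneg hpos2 hmass hmom φ hφc hφdec hφconv
end

section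
/- For every fixed 1 ≤ p < 2, the sequence n ↦ R_{p,n} := Γ(5/p)Γ(1/p)/Γ(3/p)² · Γ(1+(n+2)/p)² / (Γ(1+n/p)·Γ(1+(n+4)/p)) is strictly increasing in n, and its limit as n → ∞ equals Γ(5/p)Γ(1/p)/Γ(3/p)². -/
/-!
Write `gammaRatio a x = Γ(x + a)² / (Γ(x) Γ(x + 2a))`; the sequence in question is the constant
`Γ(5/p) Γ(1/p) / Γ(3/p)²` times `gammaRatio (2/p) (1 + n/p)`. Gauss's product formula for `Γ`
gives `gammaRatio a x = ∏_{j ≥ 0} (1 - (a / (x + j + a))²)`, a product of factors in `(0, 1]`,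
each increasing in `x`. Hence `gammaRatio a` is monotone and at most `1`, and the functional
equation `gammaRatio a x = (1 - (a / (x + a))²) · gammaRatio a (x + 1)` makes it strictly
increasing. The same equation shows that `gammaRatio a (x + m)` is the quotient of `gammaRatio a x`
by the `m`-th partial product, so it tends to `1`.
-/

open Real Filter

open Finset Topology

noncomputable def gammaRatio (a x : ℝ) : ℝ := Gamma (x + a) ^ 2 / (Gamma x * Gamma (x + 2 * a))

section

variable {a x : ℝ}

lemma one_sub_div_add_sq_eq (ha : 0 ≤ a) (hx : 0 < x) :
    1 - (a / (x + a)) ^ 2 = x * (x + 2 * a) / (x + a) ^ 2 := by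
  have : x + a ≠ 0 := by positivity
  field_simp
  ring

lemma one_sub_div_add_sq_pos (ha : 0 ≤ a) (hx : 0 < x) : 0 < 1 - (a / (x + a)) ^ 2 := by
  rw [one_sub_div_add_sq_eq ha hx]
  positivity

lemma gammaRatio_pos (ha : 0 ≤ a) (hx : 0 < x) : 0 < gammaRatio a x := by
  unfold gammaRatio
  positivity

lemma gammaRatio_eq_mul_gammaRatio_add_one (ha : 0 ≤ a) (hx : 0 < x) :
    gammaRatio a x = (1 - (a / (x + a)) ^ 2) * gammaRatio a (x + 1) := by
  have h₁ : x + 1 + a = (x + a) + 1 := by ring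
  have h₂ : x + 1 + 2 * a = (x + 2 * a) + 1 := by ring
  have : Gamma x * Gamma (x + 2 * a) ≠ 0 := by positivity
  rw [one_sub_div_add_sq_eq ha hx, gammaRatio, gammaRatio, h₁, h₂,
    Gamma_add_one hx.ne', Gamma_add_one (by positivity), Gamma_add_one (by positivity)]
  field_simp

lemma gammaRatio_eq_prod_mul (ha : 0 ≤ a) (hx : 0 < x) (m : ℕ) :
    gammaRatio a x = (∏ i ∈ range m, (1 - (a / (x + i + a)) ^ 2)) * gammaRatio a (x + m) := by
  induction m with
  | zero => simp
  | succ m ih =>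
    rw [ih, gammaRatio_eq_mul_gammaRatio_add_one ha (by positivity), prod_range_succ]
    push_cast
    ring_nf

lemma GammaSeq_sq_div_mul_eq_prod (ha : 0 ≤ a) (hx : 0 < x) {n : ℕ} (hn : n ≠ 0) :
    GammaSeq (x + a) n ^ 2 / (GammaSeq x n * GammaSeq (x + 2 * a) n) =
      ∏ j ∈ range (n + 1), (1 - (a / (x + j + a)) ^ 2) := by
  have hn' : (0 : ℝ) < n := by positivity
  have hpow : ((n : ℝ) ^ (x + a)) ^ 2 = (n : ℝ) ^ x * (n : ℝ) ^ (x + 2 * a) := by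
    rw [← rpow_natCast, ← rpow_mul hn'.le, ← rpow_add hn']
    ring_nf
  simp_rw [fun j : ℕ => one_sub_div_add_sq_eq ha (show 0 < x + j by positivity),
    prod_div_distrib, prod_mul_distrib, prod_pow, GammaSeq]
  field_simp
  rw [hpow]
  ring_nf

lemma tendsto_prod_gammaRatio (ha : 0 ≤ a) (hx : 0 < x) :
    Tendsto (fun n : ℕ => ∏ j ∈ range n, (1 - (a / (x + j + a)) ^ 2)) atTop
      (𝓝 (gammaRatio a x)) := by
  rw [← tendsto_add_atTop_iff_nat 1]
  have hne : Gamma x * Gamma (x + 2 * a) ≠ 0 := by positivity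
  refine (((GammaSeq_tendsto_Gamma (x + a)).pow 2).div
    ((GammaSeq_tendsto_Gamma x).mul (GammaSeq_tendsto_Gamma (x + 2 * a))) hne).congr' ?_
  filter_upwards [eventually_ne_atTop 0] with n hn
  exact GammaSeq_sq_div_mul_eq_prod ha hx hn

lemma gammaRatio_le_one (ha : 0 ≤ a) (hx : 0 < x) : gammaRatio a x ≤ 1 :=
  le_of_tendsto' (tendsto_prod_gammaRatio ha hx) fun _ =>
    prod_le_one (fun j _ => (one_sub_div_add_sq_pos ha (by positivity)).le)
      fun _ _ => sub_le_self _ (sq_nonneg _)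

lemma monotoneOn_gammaRatio (ha : 0 ≤ a) : MonotoneOn (gammaRatio a) (Set.Ioi 0) :=
  fun x (hx : 0 < x) y (hy : 0 < y) hxy =>
    le_of_tendsto_of_tendsto' (tendsto_prod_gammaRatio ha hx) (tendsto_prod_gammaRatio ha hy)
      fun _ => prod_le_prod (fun _ _ => (one_sub_div_add_sq_pos ha (by positivity)).le)
        fun _ _ => by gcongr

lemma strictMonoOn_gammaRatio (ha : 0 < a) : StrictMonoOn (gammaRatio a) (Set.Ioi 0) := by
  intro x (hx : 0 < x) y (hy : 0 < y) hxy
  rw [gammaRatio_eq_mul_gammaRatio_add_one ha.le hx, gammaRatio_eq_mul_gammaRatio_add_one ha.le hy]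
  have hfactor : 1 - (a / (x + a)) ^ 2 < 1 - (a / (y + a)) ^ 2 := by gcongr
  exact mul_lt_mul hfactor
    (monotoneOn_gammaRatio ha.le (show 0 < x + 1 by positivity) (show 0 < y + 1 by positivity)
      (by linarith))
    (gammaRatio_pos ha.le (by positivity)) (one_sub_div_add_sq_pos ha.le hy).le

lemma tendsto_gammaRatio_add_nat (ha : 0 ≤ a) (hx : 0 < x) :
    Tendsto (fun m : ℕ => gammaRatio a (x + m)) atTop (𝓝 1) := by
  have hQ := (gammaRatio_pos ha hx).ne'
  have h := (tendsto_const_nhds (x := gammaRatio a x)).div (tendsto_prod_gammaRatio ha hx) hQ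
  rw [div_self hQ] at h
  refine h.congr fun m => ?_
  rw [Pi.div_apply, gammaRatio_eq_prod_mul ha hx m, mul_div_cancel_left₀]
  exact prod_ne_zero_iff.2 fun j _ => (one_sub_div_add_sq_pos ha (by positivity)).ne'

lemma tendsto_gammaRatio_atTop (ha : 0 ≤ a) : Tendsto (gammaRatio a) atTop (𝓝 1) := by
  refine tendsto_order.2 ⟨fun l hl => ?_, fun u hu => ?_⟩
  · obtain ⟨m, hm⟩ :=
      ((tendsto_gammaRatio_add_nat ha one_pos).eventually (lt_mem_nhds hl)).exists
    have hm_pos : (0 : ℝ) < 1 + m := by positivity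
    filter_upwards [eventually_ge_atTop (1 + (m : ℝ))] with t ht
    exact hm.trans_le (monotoneOn_gammaRatio ha hm_pos (hm_pos.trans_le ht) ht)
  · filter_upwards [eventually_gt_atTop 0] with t ht
    exact (gammaRatio_le_one ha ht).trans_lt hu

end

theorem stmt_9_general (p : ℝ) (hp1 : 1 ≤ p) :
    StrictMono (fun n : ℕ =>
      Gamma (5 / p) * Gamma (1 / p) / Gamma (3 / p) ^ 2 *
        (Gamma (1 + ((n : ℝ) + 2) / p) ^ 2 /
          (Gamma (1 + (n : ℝ) / p) * Gamma (1 + ((n : ℝ) + 4) / p)))) ∧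
    Tendsto (fun n : ℕ =>
      Gamma (5 / p) * Gamma (1 / p) / Gamma (3 / p) ^ 2 *
        (Gamma (1 + ((n : ℝ) + 2) / p) ^ 2 /
          (Gamma (1 + (n : ℝ) / p) * Gamma (1 + ((n : ℝ) + 4) / p))))
      atTop (nhds (Gamma (5 / p) * Gamma (1 / p) / Gamma (3 / p) ^ 2)) := by
  have hp : 0 < p := one_pos.trans_le hp1
  have hC : 0 < Gamma (5 / p) * Gamma (1 / p) / Gamma (3 / p) ^ 2 := by positivity
  have hseq : ∀ n : ℕ, Gamma (1 + ((n : ℝ) + 2) / p) ^ 2 /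
      (Gamma (1 + (n : ℝ) / p) * Gamma (1 + ((n : ℝ) + 4) / p)) =
        gammaRatio (2 / p) (1 + n / p) := fun n => by
    rw [gammaRatio, add_div, add_div, ← add_assoc, ← add_assoc, mul_div_assoc']
    norm_num
  have hx_mono : StrictMono fun n : ℕ => 1 + (n : ℝ) / p :=
    (Nat.strictMono_cast.div_const hp).const_add 1
  have hx_tendsto : Tendsto (fun n : ℕ => 1 + (n : ℝ) / p) atTop atTop :=
    tendsto_atTop_add_const_left _ 1 (tendsto_natCast_atTop_atTop.atTop_div_const hp)
  simp only [hseq]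
  refine ⟨fun m n hmn => mul_lt_mul_of_pos_left ?_ hC, ?_⟩
  · exact strictMonoOn_gammaRatio (by positivity) (show 0 < 1 + m / p by positivity)
      (show 0 < 1 + n / p by positivity) (hx_mono hmn)
  · simpa using ((tendsto_gammaRatio_atTop (by positivity)).comp hx_tendsto).const_mul
      (Gamma (5 / p) * Gamma (1 / p) / Gamma (3 / p) ^ 2)

theorem stmt_9 (p : ℝ) (hp1 : 1 ≤ p) (hp2 : p < 2) :
    StrictMono (fun n : ℕ =>
      Gamma (5 / p) * Gamma (1 / p) / Gamma (3 / p) ^ 2 *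
        (Gamma (1 + ((n : ℝ) + 2) / p) ^ 2 /
          (Gamma (1 + (n : ℝ) / p) * Gamma (1 + ((n : ℝ) + 4) / p)))) ∧
    Tendsto (fun n : ℕ =>
      Gamma (5 / p) * Gamma (1 / p) / Gamma (3 / p) ^ 2 *
        (Gamma (1 + ((n : ℝ) + 2) / p) ^ 2 /
          (Gamma (1 + (n : ℝ) / p) * Gamma (1 + ((n : ℝ) + 4) / p))))
      atTop (nhds (Gamma (5 / p) * Gamma (1 / p) / Gamma (3 / p) ^ 2)) :=
  stmt_9_general p hp1
end

section
/- Let 1 ≤ p < 2 and let Z have density g_p(x) = e^{−|x|^p}/(2Γ(1+1/p)). Then the kurtosis E Z⁴/(E Z²)² = Γ(5/p)Γ(1/p)/Γ(3/p)² is strictly greater than 3. -/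
/-!
Substituting `t = |x| ^ p` gives the moments `E Z ^ k = Γ((k + 1) / p) / Γ(1 / p)`, so the kurtosis
is `Γ(5a) Γ(a) / Γ(3a)²` with `a = 1 / p > 1 / 2`. Euler's limit formula for `Γ` writes this ratio
as the infinite product of `(3a + j)² / ((5a + j) (a + j))`. Each factor is nondecreasing in `a`,
strictly increasing for `j ≥ 1`, and at `a = 1 / 2` (the Gaussian case) the product equals `3`.
-/

open Real MeasureTheory Filter Finset Topology

lemma Finset.prod_mul_div_le_prod {ι α : Type*} [Field α] [LinearOrder α] [IsStrictOrderedRing α]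
    {s : Finset ι} {u w : ι → α} (hu : ∀ i ∈ s, 0 ≤ u i) (huw : ∀ i ∈ s, u i ≤ w i)
    {j : ι} (hj : j ∈ s) (huj : u j ≠ 0) :
    (∏ i ∈ s, u i) * (w j / u j) ≤ ∏ i ∈ s, w i := by
  classical
  rw [← mul_prod_erase s u hj, ← mul_prod_erase s w hj]
  calc u j * (∏ i ∈ s.erase j, u i) * (w j / u j) = w j * ∏ i ∈ s.erase j, u i := by
        field_simp
    _ ≤ w j * ∏ i ∈ s.erase j, w i := by
        refine mul_le_mul_of_nonneg_left (prod_le_prod ?_ ?_) ((hu j hj).trans (huw j hj))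
        · exact fun i hi => hu i (mem_of_mem_erase hi)
        · exact fun i hi => huw i (mem_of_mem_erase hi)

lemma integral_abs_rpow_mul_exp_neg_abs_rpow {p q : ℝ} (hp : 0 < p) (hq : -1 < q) :
    ∫ x : ℝ, |x| ^ q * exp (-|x| ^ p) = 2 * (1 / p * Gamma ((q + 1) / p)) := by
  rw [integral_comp_abs (f := fun x => x ^ q * exp (-x ^ p)),
    integral_rpow_mul_exp_neg_rpow hp hq]

lemma integral_pow_mul_exp_neg_abs_rpow_div {p : ℝ} (hp : 0 < p) {k : ℕ} (hk : Even k) :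
    ∫ x : ℝ, x ^ k * (exp (-|x| ^ p) / (2 * Gamma (1 + 1 / p))) =
      Gamma ((k + 1) / p) / Gamma (1 / p) := by
  have hΓ : Gamma (1 + 1 / p) = 1 / p * Gamma (1 / p) := by
    rw [add_comm, Gamma_add_one (by positivity)]
  have hΓpos : 0 < Gamma (1 / p) := Gamma_pos_of_pos (by positivity)
  have hpow : ∀ x : ℝ, x ^ k = |x| ^ (k : ℝ) := fun x => by rw [rpow_natCast, hk.pow_abs]
  have hk1 : (-1 : ℝ) < k := by linarith [(k.cast_nonneg : (0 : ℝ) ≤ k)]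
  simp_rw [← mul_div_assoc, hpow]
  rw [integral_div, integral_abs_rpow_mul_exp_neg_abs_rpow hp hk1, hΓ]
  field_simp

lemma tendsto_prod_Gamma_mul_Gamma_div_Gamma_sq {x y z : ℝ} (hx : 0 < x) (hy : 0 < y)
    (hxyz : x + y = 2 * z) :
    Tendsto (fun n : ℕ => ∏ j ∈ range (n + 1), (z + j) ^ 2 / ((x + j) * (y + j))) atTop
      (𝓝 (Gamma x * Gamma y / Gamma z ^ 2)) := by
  have hz : 0 < z := by linarith
  refine (((GammaSeq_tendsto_Gamma x).mul (GammaSeq_tendsto_Gamma y)).div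
    ((GammaSeq_tendsto_Gamma z).pow 2) (pow_ne_zero 2 (Gamma_pos_of_pos hz).ne')).congr' ?_
  filter_upwards [eventually_ge_atTop 1] with n hn
  have hn0 : (0 : ℝ) < n := by exact_mod_cast hn
  have hpow : (n : ℝ) ^ x * (n : ℝ) ^ y = ((n : ℝ) ^ z) ^ 2 := by
    rw [← rpow_add hn0, hxyz, ← rpow_natCast, ← rpow_mul hn0.le, mul_comm]
    norm_num
  have hprod_pos : ∀ t > 0, 0 < ∏ j ∈ range (n + 1), (t + (j : ℝ)) :=
    fun t ht => prod_pos fun j _ => by positivity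
  have hx_prod := hprod_pos x hx
  have hy_prod := hprod_pos y hy
  have hz_prod := hprod_pos z hz
  have hfact : (0 : ℝ) < n.factorial := by exact_mod_cast n.factorial_pos
  rw [prod_div_distrib, prod_pow, prod_mul_distrib]
  simp only [Pi.div_apply, GammaSeq]
  field_simp
  linear_combination hpow

noncomputable def kurtosisFactor (a : ℝ) (j : ℕ) : ℝ :=
  (3 * a + j) ^ 2 / ((5 * a + j) * (a + j))

/- `kurtosisFactor a j = 1 + 4 / ((5 + j / a) * (1 + j / a))`, which is increasing in `a`,
strictly so when `j ≠ 0`; cross-multiplied, the gap is `4 j (a - b) (6 a b + j (a + b))`. -/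
lemma kurtosisFactor_le_kurtosisFactor {a b : ℝ} (hb : 0 < b) (hab : b ≤ a) (j : ℕ) :
    kurtosisFactor b j ≤ kurtosisFactor a j := by
  have hj : (0 : ℝ) ≤ j := j.cast_nonneg
  have ha : 0 < a := hb.trans_le hab
  rw [kurtosisFactor, kurtosisFactor, div_le_div_iff₀ (by positivity) (by positivity)]
  nlinarith [mul_nonneg (mul_nonneg hj (sub_nonneg.2 hab))
    (by positivity : 0 ≤ 6 * a * b + j * (a + b))]

lemma kurtosisFactor_lt_kurtosisFactor {a b : ℝ} (hb : 0 < b) (hab : b < a) {j : ℕ}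
    (hj : j ≠ 0) : kurtosisFactor b j < kurtosisFactor a j := by
  have hj : (0 : ℝ) < j := by exact_mod_cast Nat.pos_of_ne_zero hj
  have ha : 0 < a := hb.trans hab
  rw [kurtosisFactor, kurtosisFactor, div_lt_div_iff₀ (by positivity) (by positivity)]
  nlinarith [mul_pos (mul_pos hj (sub_pos.2 hab)) (by positivity : 0 < 6 * a * b + j * (a + b))]

lemma tendsto_prod_kurtosisFactor {a : ℝ} (ha : 0 < a) :
    Tendsto (fun n : ℕ => ∏ j ∈ range (n + 1), kurtosisFactor a j) atTop
      (𝓝 (Gamma (5 * a) * Gamma a / Gamma (3 * a) ^ 2)) :=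
  tendsto_prod_Gamma_mul_Gamma_div_Gamma_sq (by positivity) ha (by ring)

lemma Gamma_five_halves_mul_Gamma_one_half_div_Gamma_three_halves_sq :
    Gamma (5 * (1 / 2)) * Gamma (1 / 2) / Gamma (3 * (1 / 2)) ^ 2 = 3 := by
  have h3 : Gamma (3 * (1 / 2)) = 1 / 2 * Gamma (1 / 2) := by
    rw [show (3 * (1 / 2) : ℝ) = 1 / 2 + 1 by norm_num, Gamma_add_one (by norm_num)]
  have h5 : Gamma (5 * (1 / 2)) = 3 / 2 * Gamma (3 * (1 / 2)) := by
    rw [show (5 * (1 / 2) : ℝ) = 3 * (1 / 2) + 1 by norm_num, Gamma_add_one (by norm_num)]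
    norm_num
  have hpos : 0 < Gamma (1 / 2) := Gamma_pos_of_pos (by norm_num)
  rw [h5, h3]
  field_simp

theorem three_lt_Gamma_mul_Gamma_div_Gamma_sq {a : ℝ} (ha : 1 / 2 < a) :
    3 < Gamma (5 * a) * Gamma a / Gamma (3 * a) ^ 2 := by
  have hhalf : (0 : ℝ) < 1 / 2 := by norm_num
  set c := kurtosisFactor a 1 / kurtosisFactor (1 / 2) 1
  have hfactor_pos : 0 < kurtosisFactor (1 / 2) 1 := by rw [kurtosisFactor]; positivity
  have hc : 1 < c :=
    (one_lt_div hfactor_pos).2 (kurtosisFactor_lt_kurtosisFactor hhalf ha one_ne_zero)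
  have hlim_half := (tendsto_prod_kurtosisFactor hhalf).mul_const c
  rw [Gamma_five_halves_mul_Gamma_one_half_div_Gamma_three_halves_sq] at hlim_half
  have hle : 3 * c ≤ Gamma (5 * a) * Gamma a / Gamma (3 * a) ^ 2 := by
    refine le_of_tendsto_of_tendsto hlim_half (tendsto_prod_kurtosisFactor (hhalf.trans ha)) ?_
    filter_upwards [eventually_ge_atTop 1] with n hn
    refine prod_mul_div_le_prod (fun j _ => ?_)
      (fun j _ => kurtosisFactor_le_kurtosisFactor hhalf ha.le j)
      (mem_range.2 (by omega)) hfactor_pos.ne'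
    rw [kurtosisFactor]; positivity
  linarith

theorem stmt_11 (p : ℝ) (hp1 : 1 ≤ p) (hp2 : p < 2) :
    (∫ x : ℝ, x ^ 4 * (exp (-|x| ^ p) / (2 * Gamma (1 + 1 / p)))) /
        (∫ x : ℝ, x ^ 2 * (exp (-|x| ^ p) / (2 * Gamma (1 + 1 / p)))) ^ 2
      = Gamma (5 / p) * Gamma (1 / p) / Gamma (3 / p) ^ 2 ∧
    3 < Gamma (5 / p) * Gamma (1 / p) / Gamma (3 / p) ^ 2 := by
  have hp : 0 < p := by linarith
  have hΓ1 : 0 < Gamma (1 / p) := Gamma_pos_of_pos (by positivity)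
  have hΓ3 : 0 < Gamma (3 / p) := Gamma_pos_of_pos (by positivity)
  constructor
  · rw [integral_pow_mul_exp_neg_abs_rpow_div hp (by decide),
      integral_pow_mul_exp_neg_abs_rpow_div hp (by decide)]
    norm_num
    field_simp
  · have ha : 1 / 2 < 1 / p := by rw [lt_div_iff₀ hp]; linarith
    simpa only [mul_one_div] using three_lt_Gamma_mul_Gamma_div_Gamma_sq ha
end

section
/- For n ≥ 2, the quantity Δ_{1,n} = m_4 − 3v², where v = 2/((n+1)(n+2)) and m_4 = 24/((n+1)(n+2)(n+3)(n+4)), has the same sign as n² − n − 8. In particular Δ_{1,n} < 0 for n = 2,3 and Δ_{1,n} > 0 for all n ≥ 4. -/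
theorem stmt_12 (n : ℕ) (hn : 2 ≤ n) :
    ((24 / (((n : ℝ) + 1) * (n + 2) * (n + 3) * (n + 4))
        - 3 * (2 / (((n : ℝ) + 1) * (n + 2))) ^ 2 < 0 ↔ (n : ℝ) ^ 2 - n - 8 < 0) ∧
      (0 < 24 / (((n : ℝ) + 1) * (n + 2) * (n + 3) * (n + 4))
        - 3 * (2 / (((n : ℝ) + 1) * (n + 2))) ^ 2 ↔ 0 < (n : ℝ) ^ 2 - n - 8)) ∧
    ((n = 2 ∨ n = 3) →
      24 / (((n : ℝ) + 1) * (n + 2) * (n + 3) * (n + 4))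
        - 3 * (2 / (((n : ℝ) + 1) * (n + 2))) ^ 2 < 0) ∧
    (4 ≤ n →
      0 < 24 / (((n : ℝ) + 1) * (n + 2) * (n + 3) * (n + 4))
        - 3 * (2 / (((n : ℝ) + 1) * (n + 2))) ^ 2) := by
  set x : ℝ := (n : ℝ) with hx
  have hx0 : 0 ≤ x := Nat.cast_nonneg n
  have h1 : (0:ℝ) < x + 1 := by linarith
  have h2 : (0:ℝ) < x + 2 := by linarith
  have h3 : (0:ℝ) < x + 3 := by linarith
  have h4 : (0:ℝ) < x + 4 := by linarith
  have hD : (0:ℝ) < (x + 1) ^ 2 * (x + 2) ^ 2 * (x + 3) * (x + 4) := by positivity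
  have key : 24 / ((x + 1) * (x + 2) * (x + 3) * (x + 4))
      - 3 * (2 / ((x + 1) * (x + 2))) ^ 2
      = 12 * (x ^ 2 - x - 8) / ((x + 1) ^ 2 * (x + 2) ^ 2 * (x + 3) * (x + 4)) := by
    field_simp
    ring
  rw [key]
  constructor
  · constructor
    · constructor
      · intro h
        nlinarith [mul_pos (mul_pos (mul_pos (mul_pos h1 h2) h3) h4) h1,
          div_mul_cancel₀ (12 * (x ^ 2 - x - 8)) (ne_of_gt hD)]
      · intro h
        exact div_neg_of_neg_of_pos (by linarith) hD
    · constructor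
      · intro h
        nlinarith [div_mul_cancel₀ (12 * (x ^ 2 - x - 8)) (ne_of_gt hD)]
      · intro h
        exact div_pos (by linarith) hD
  constructor
  · rintro (rfl | rfl) <;> norm_num
  · intro h4n
    have : (4:ℝ) ≤ x := by rw [hx]; exact_mod_cast h4n
    exact div_pos (by nlinarith) hD
end

section
/- Let 1/2 < α < 1 and δ ≥ 3α. Then for all 0 ≤ a < b ≤ 1: α·∫_a^b t^{2α−1}(1−t)^δ dt ≤ (b^{2α} − a^{2α})/4 · ((1−a)^δ + (1−b)^δ). -/
/-!
Substituting `y = t ^ (2α)` turns `2α ∫_a^b t^(2α-1) (1-t)^δ dt` into `∫_A^B F` with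
`F y = (1 - y ^ μ) ^ δ`, `μ = (2α)⁻¹`, `A = a ^ (2α)`, `B = b ^ (2α)`, and `F A = (1-a)^δ`,
`F B = (1-b)^δ`. Since `μ ≤ 1 ≤ δ`, `F` is a convex monotone power of the convex function
`1 - y ^ μ`, so the claim is the trapezoid bound `∫_A^B F ≤ (B - A) (F A + F B) / 2`, which
follows by integrating `F y + F (A + B - y) ≤ F A + F B`.
-/

open Set intervalIntegral

theorem convexOn_one_sub_rpow_rpow {μ δ : ℝ} (hμ₀ : 0 ≤ μ) (hμ₁ : μ ≤ 1) (hδ : 1 ≤ δ) :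
    ConvexOn ℝ (Icc 0 1) fun y : ℝ => (1 - y ^ μ) ^ δ := by
  have hinner : ConvexOn ℝ (Icc 0 1) fun y : ℝ => 1 - y ^ μ :=
    (convexOn_const 1 (convex_Icc 0 1)).sub
      ((Real.concaveOn_rpow hμ₀ hμ₁).subset Icc_subset_Ici_self (convex_Icc 0 1))
  have himage : (fun y : ℝ => 1 - y ^ μ) '' Icc 0 1 ⊆ Ici 0 := by
    rintro _ ⟨y, hy, rfl⟩
    exact sub_nonneg.2 (Real.rpow_le_one hy.1 hy.2 hμ₀)
  have himage_convex : Convex ℝ ((fun y : ℝ => 1 - y ^ μ) '' Icc 0 1) :=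
    Real.convex_iff_isPreconnected.2 <| isPreconnected_Icc.image _ <| by
      fun_prop (disch := assumption)
  exact ((convexOn_rpow hδ).subset himage himage_convex).comp hinner
    ((Real.monotoneOn_rpow_Ici_of_exponent_nonneg (by linarith)).mono himage)

theorem ConvexOn.apply_add_apply_add_sub_le {s : Set ℝ} {f : ℝ → ℝ} (hf : ConvexOn ℝ s f)
    {a b x : ℝ} (ha : a ∈ s) (hb : b ∈ s) (hx : x ∈ Icc a b) :
    f x + f (a + b - x) ≤ f a + f b := by
  obtain ⟨θ, η, hθ, hη, hθη, rfl⟩ : x ∈ segment ℝ a b := by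
    rwa [segment_eq_Icc (hx.1.trans hx.2)]
  have hreflect : a + b - (θ • a + η • b) = η • a + θ • b := by
    simp only [smul_eq_mul]
    linear_combination -(a + b) * hθη
  have hleft := hf.2 ha hb hθ hη hθη
  have hright := hf.2 ha hb hη hθ (by linarith)
  rw [hreflect]
  simp only [smul_eq_mul] at hleft hright ⊢
  linear_combination hleft + hright + (f a + f b) * hθη

theorem ConvexOn.integral_le_trapezoid {s : Set ℝ} {f : ℝ → ℝ} (hf : ConvexOn ℝ s f)
    {a b : ℝ} (hab : a ≤ b) (ha : a ∈ s) (hb : b ∈ s)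
    (hint : IntervalIntegrable f MeasureTheory.volume a b) :
    ∫ x in a..b, f x ≤ (b - a) * (f a + f b) / 2 := by
  have hreflect_int : IntervalIntegrable (fun x => f (a + b - x)) MeasureTheory.volume a b := by
    simpa using hint.symm.comp_sub_left (a + b)
  have hreflect : ∫ x in a..b, f (a + b - x) = ∫ x in a..b, f x := by
    simp [integral_comp_sub_left]
  have hsum : ∫ x in a..b, (f x + f (a + b - x)) ≤ ∫ _ in a..b, (f a + f b) :=
    integral_mono_on hab (hint.add hreflect_int) intervalIntegrable_const
      fun x hx => hf.apply_add_apply_add_sub_le ha hb hx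
  rw [integral_add hint hreflect_int, hreflect, integral_const, smul_eq_mul] at hsum
  linarith

theorem integral_rpow_sub_one_mul_comp_rpow {p : ℝ} (hp : 1 ≤ p) {g : ℝ → ℝ}
    (hg : Continuous g) (a b : ℝ) :
    ∫ t in a..b, p * t ^ (p - 1) * g (t ^ p) = ∫ y in a ^ p..b ^ p, g y := by
  have hderiv : ∀ t ∈ uIcc a b, HasDerivAt (fun t : ℝ => t ^ p) (p * t ^ (p - 1)) t :=
    fun t _ => Real.hasDerivAt_rpow_const (Or.inr hp)
  have hcont : ContinuousOn (fun t : ℝ => p * t ^ (p - 1)) (uIcc a b) :=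
    ((Real.continuous_rpow_const (by linarith)).const_mul p).continuousOn
  simpa only [Function.comp_apply, mul_comm] using integral_comp_mul_deriv hderiv hcont hg

theorem stmt_13_general (α δ a b : ℝ) (hα1 : 1 / 2 < α) (hδ : 3 * α ≤ δ)
    (ha : 0 ≤ a) (hab : a < b) (hb : b ≤ 1) :
    α * ∫ t in a..b, t ^ (2 * α - 1) * (1 - t) ^ δ
      ≤ (b ^ (2 * α) - a ^ (2 * α)) / 4 * ((1 - a) ^ δ + (1 - b) ^ δ) := by
  set F : ℝ → ℝ := fun y => (1 - y ^ (2 * α)⁻¹) ^ δ with hF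
  have hF_convex : ConvexOn ℝ (Icc 0 1) F :=
    convexOn_one_sub_rpow_rpow (by positivity) (inv_le_one_of_one_le₀ (by linarith)) (by linarith)
  have hF_cont : Continuous F := by
    have : 0 ≤ (2 * α)⁻¹ := by positivity
    have : 0 ≤ δ := by linarith
    fun_prop (disch := assumption)
  have hF_rpow : ∀ t, 0 ≤ t → F (t ^ (2 * α)) = (1 - t) ^ δ := fun t ht => by
    simp only [hF]
    rw [← Real.rpow_mul ht, mul_inv_cancel₀ (by linarith), Real.rpow_one]
  have hmem : ∀ t ∈ Icc (0 : ℝ) 1, t ^ (2 * α) ∈ Icc (0 : ℝ) 1 := fun t ht =>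
    ⟨Real.rpow_nonneg ht.1 _, Real.rpow_le_one ht.1 ht.2 (by linarith)⟩
  have hsubst : α * ∫ t in a..b, t ^ (2 * α - 1) * (1 - t) ^ δ
      = (∫ y in a ^ (2 * α)..b ^ (2 * α), F y) / 2 := by
    rw [← integral_rpow_sub_one_mul_comp_rpow (by linarith) hF_cont, mul_comm α,
      ← integral_mul_const, eq_div_iff two_ne_zero, ← integral_mul_const]
    refine integral_congr fun t ht => ?_
    rw [uIcc_of_le hab.le] at ht
    rw [hF_rpow t (ha.trans ht.1)]
    ring
  rw [hsubst, ← hF_rpow a ha, ← hF_rpow b (ha.trans hab.le)]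
  have htrapezoid := hF_convex.integral_le_trapezoid
    (Real.rpow_le_rpow ha hab.le (by linarith)) (hmem a ⟨ha, hab.le.trans hb⟩)
    (hmem b ⟨ha.trans hab.le, hb⟩) (hF_cont.intervalIntegrable _ _)
  linarith

theorem stmt_13 (α δ a b : ℝ) (hα1 : 1 / 2 < α) (hα2 : α < 1) (hδ : 3 * α ≤ δ)
    (ha : 0 ≤ a) (hab : a < b) (hb : b ≤ 1) :
    α * ∫ t in a..b, t ^ (2 * α - 1) * (1 - t) ^ δ
      ≤ (b ^ (2 * α) - a ^ (2 * α)) / 4 * ((1 - a) ^ δ + (1 - b) ^ δ) :=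
  stmt_13_general α δ a b hα1 hδ ha hab hb
end

section
/- Fix ℓ ≥ 0, 0 ≤ B ≤ 1, and 0 ≤ x ≤ y. Define Φ_ℓ(t) = (ℓ² − t²)₊ and Q_ℓ(x,y) = Φ_ℓ(By − x) − Φ_ℓ(By + x). Then Q_ℓ(x,y) ≥ Q_ℓ(y,x). -/
lemma aux_shift (c p q D : ℝ) (hD : 0 ≤ D) (hpq : p ≤ q) :
    max (c - (p + D)) 0 - max (c - (q + D)) 0 ≤ max (c - p) 0 - max (c - q) 0 := by
  rw [max_def, max_def, max_def, max_def]
  split_ifs <;> linarith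

theorem stmt_15 (ℓ B x y : ℝ) (hℓ : 0 ≤ ℓ) (hB0 : 0 ≤ B) (hB1 : B ≤ 1)
    (hx : 0 ≤ x) (hxy : x ≤ y) :
    max (ℓ ^ 2 - (B * x - y) ^ 2) 0 - max (ℓ ^ 2 - (B * x + y) ^ 2) 0
      ≤ max (ℓ ^ 2 - (B * y - x) ^ 2) 0 - max (ℓ ^ 2 - (B * y + x) ^ 2) 0 := by
  have hy : 0 ≤ y := le_trans hx hxy
  have hD : 0 ≤ (1 - B^2) * (y^2 - x^2) := by
    apply mul_nonneg <;> nlinarith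
  have hpq : (B * y - x)^2 ≤ (B * y + x)^2 := by
    nlinarith [mul_nonneg (mul_nonneg hB0 hy) hx]
  have h1 : (B * x - y)^2 = (B * y - x)^2 + (1 - B^2) * (y^2 - x^2) := by ring
  have h2 : (B * x + y)^2 = (B * y + x)^2 + (1 - B^2) * (y^2 - x^2) := by ring
  rw [h1, h2]
  exact aux_shift _ _ _ _ hD hpq
end
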